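/- Let Φ = {φ_i(x) = ρ x + a_i}_{i∈Γ} be an equicontractive homothetic self-similar IFS on ℝ^d satisfying the weak separation condition, with 𝚊₀ attaining the maximal neighbourhood system 𝒩₀ = 𝒩(𝚊₀), and suppose for some h₁ ∈ 𝒩₀ that K_{𝚊₀} ∩ h₁(K) ≠ ∅. Then there exist finite words 𝚋, 𝚌 ∈ Γ* with φ_𝚋 = h₁ ∘ φ_𝚌, i.e. a descendant of h₁(K) overlaps exactly with a cylinder of K. -/

import Mathlib

open Metric

/-- Composition `φ_𝚊` along a finite word. -/
def wordMap {Γ α : Type*} (φ : Γ → α → α) : List Γ → α → α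
  | [] => id
  | i :: a => φ i ∘ wordMap φ a

/-- Equicontractive neighbourhood system
`𝒩(𝚊) = { φ_𝚊⁻¹ ∘ φ_𝚋 : 𝚋 ∈ Γ^{|𝚊|}, K_𝚋 ∩ B_𝚊 ≠ ∅ }`. -/
def nbhdE {Γ : Type*} {d : ℕ}
    (φ : Γ → EuclideanSpace ℝ (Fin d) → EuclideanSpace ℝ (Fin d))
    (K : Set (EuclideanSpace ℝ (Fin d))) (a : List Γ) :
    Set (EuclideanSpace ℝ (Fin d) → EuclideanSpace ℝ (Fin d)) :=
  {f | ∃ b : List Γ, b.length = a.length ∧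
    (wordMap φ b '' K ∩ wordMap φ a '' closedBall 0 1).Nonempty ∧
    wordMap φ a ∘ f = wordMap φ b}

/-
The neighbourhood system can only grow under prefixing, `𝒩(𝚊) ⊆ 𝒩(𝚞𝚊)`, so at a maximiser
`𝚊₀` it is stationary: `𝒩(𝚊₀𝚊₀) = 𝒩₀`. If `φ_{𝚊₀}(z) = h₁(y)` and `y` lies in the cylinder
`φ_𝚌(K)` with `|𝚌| = |𝚊₀|`, then `φ_{𝚊₀}⁻¹ ∘ h₁ ∘ φ_𝚌` is a neighbour of `𝚊₀𝚊₀` (witnessed by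
the word `𝚋₁𝚌`, where `φ_{𝚊₀} ∘ h₁ = φ_{𝚋₁}`), hence lies in `𝒩₀`, i.e. equals
`φ_{𝚊₀}⁻¹ ∘ φ_𝚋` for some `𝚋`.
-/

section WordMap

variable {Γ α : Type*} (φ : Γ → α → α)

theorem wordMap_append (u v : List Γ) :
    wordMap φ (u ++ v) = wordMap φ u ∘ wordMap φ v := by
  induction u with
  | nil => rfl
  | cons i u ih => simp only [wordMap, List.cons_append, ih, Function.comp_assoc]

theorem wordMap_surjective (hφ : ∀ i, Function.Surjective (φ i)) (w : List Γ) :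
    Function.Surjective (wordMap φ w) := by
  induction w with
  | nil => exact Function.surjective_id
  | cons i w ih => exact (hφ i).comp ih

theorem exists_length_eq_mem_image_wordMap {K : Set α} (hattr : K = ⋃ i, φ i '' K) (n : ℕ)
    {x : α} (hx : x ∈ K) : ∃ c : List Γ, c.length = n ∧ x ∈ wordMap φ c '' K := by
  induction n generalizing x with
  | zero => exact ⟨[], rfl, x, hx, rfl⟩
  | succ n ih =>
    rw [hattr] at hx
    obtain ⟨i, x', hx', rfl⟩ := Set.mem_iUnion.mp hx
    obtain ⟨c, hc, w, hw, rfl⟩ := ih hx'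
    exact ⟨i :: c, by rw [List.length_cons, hc], w, hw, rfl⟩

end WordMap

section Neighbourhood

variable {Γ : Type*} {d : ℕ} {φ : Γ → EuclideanSpace ℝ (Fin d) → EuclideanSpace ℝ (Fin d)}
  {K : Set (EuclideanSpace ℝ (Fin d))}

theorem nbhdE_subset_nbhdE_append (u a : List Γ) : nbhdE φ K a ⊆ nbhdE φ K (u ++ a) := by
  rintro h ⟨b, hb, ⟨x, hxb, hxa⟩, hab⟩
  refine ⟨u ++ b, by simp only [List.length_append, hb], ⟨wordMap φ u x, ?_, ?_⟩, ?_⟩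
  · rw [wordMap_append, Set.image_comp]
    exact Set.mem_image_of_mem _ hxb
  · rw [wordMap_append, Set.image_comp]
    exact Set.mem_image_of_mem _ hxa
  · rw [wordMap_append, wordMap_append, Function.comp_assoc, hab]

theorem nbhdE_append_eq_of_ncard_le {u a : List Γ} (hfin : (nbhdE φ K (u ++ a)).Finite)
    (hmax : (nbhdE φ K (u ++ a)).ncard ≤ (nbhdE φ K a).ncard) :
    nbhdE φ K (u ++ a) = nbhdE φ K a :=
  (Set.eq_of_subset_of_ncard_le (nbhdE_subset_nbhdE_append u a) hmax hfin).symm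

theorem mem_nbhdE_append_self (hKball : K ⊆ closedBall 0 1) {a c : List Γ}
    (hc : c.length = a.length) {h h₂ : EuclideanSpace ℝ (Fin d) → EuclideanSpace ℝ (Fin d)}
    (hh : h ∈ nbhdE φ K a) (hh₂ : wordMap φ a ∘ h₂ = h ∘ wordMap φ c)
    (hover : (wordMap φ a '' K ∩ h '' (wordMap φ c '' K)).Nonempty) :
    h₂ ∈ nbhdE φ K (a ++ a) := by
  obtain ⟨b, hb, -, hab⟩ := hh
  obtain ⟨x, ⟨z, hz, hzx⟩, _, ⟨w, hw, rfl⟩, hwx⟩ := hover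
  have hbc : wordMap φ (b ++ c) = wordMap φ a ∘ h ∘ wordMap φ c := by
    rw [wordMap_append, ← hab, Function.comp_assoc]
  refine ⟨b ++ c, by simp only [List.length_append, hb, hc], ⟨wordMap φ a x, ?_, ?_⟩, ?_⟩
  · exact ⟨w, hw, by rw [hbc, Function.comp_apply, Function.comp_apply, hwx]⟩
  · exact ⟨z, hKball hz, by rw [wordMap_append, Function.comp_apply, hzx]⟩
  · rw [hbc, wordMap_append, Function.comp_assoc, hh₂]

end Neighbourhood

theorem stmt9_general {Γ : Type*} {d : ℕ}
    (ρ : ℝ) (hρ : ρ ∈ Set.Ioo (0 : ℝ) 1) (a : Γ → EuclideanSpace ℝ (Fin d))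
    (φ : Γ → EuclideanSpace ℝ (Fin d) → EuclideanSpace ℝ (Fin d))
    (hφ : ∀ i x, φ i x = ρ • x + a i)
    (K : Set (EuclideanSpace ℝ (Fin d)))
    (hattr : K = ⋃ i, φ i '' K) (hKball : K ⊆ closedBall 0 1)
    (hfin : ∀ w : List Γ, (nbhdE φ K w).Finite)
    (a₀ : List Γ) (hmax : ∀ w : List Γ, (nbhdE φ K w).ncard ≤ (nbhdE φ K a₀).ncard)
    (h₁ : EuclideanSpace ℝ (Fin d) → EuclideanSpace ℝ (Fin d))
    (hh₁ : h₁ ∈ nbhdE φ K a₀)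
    (hover : (wordMap φ a₀ '' K ∩ h₁ '' K).Nonempty) :
    ∃ b c : List Γ, wordMap φ b = h₁ ∘ wordMap φ c := by
  have hsurj : Function.Surjective (wordMap φ a₀) :=
    wordMap_surjective φ (fun i y => ⟨ρ⁻¹ • (y - a i),
      by rw [hφ, smul_inv_smul₀ hρ.1.ne', sub_add_cancel]⟩) a₀
  obtain ⟨x, hxa, y, hy, rfl⟩ := hover
  obtain ⟨c, hc, hyc⟩ := exists_length_eq_mem_image_wordMap φ hattr a₀.length hy
  set h₂ := Function.invFun (wordMap φ a₀) ∘ h₁ ∘ wordMap φ c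
  have hh₂ : wordMap φ a₀ ∘ h₂ = h₁ ∘ wordMap φ c := by
    rw [← Function.comp_assoc, (Function.rightInverse_invFun hsurj).comp_eq_id,
      Function.id_comp]
  have hmem : h₂ ∈ nbhdE φ K (a₀ ++ a₀) :=
    mem_nbhdE_append_self hKball hc hh₁ hh₂ ⟨_, hxa, Set.mem_image_of_mem h₁ hyc⟩
  rw [nbhdE_append_eq_of_ncard_le (hfin _) (hmax _)] at hmem
  obtain ⟨b, -, -, hb⟩ := hmem
  exact ⟨b, c, hb.symm.trans hh₂⟩

/-- **Exact overlap of a descendant of a neighbour.** For an equicontractive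
homothetic IFS with the weak separation condition (with `𝚊₀` attaining the
maximal neighbourhood system `𝒩₀`), if `h₁ ∈ 𝒩₀` satisfies
`K_{𝚊₀} ∩ h₁(K) ≠ ∅`, then there are words `𝚋, 𝚌` with `φ_𝚋 = h₁ ∘ φ_𝚌`. -/
theorem stmt9 {Γ : Type*} [Fintype Γ] [Nonempty Γ] {d : ℕ}
    (ρ : ℝ) (hρ : ρ ∈ Set.Ioo (0 : ℝ) 1) (a : Γ → EuclideanSpace ℝ (Fin d))
    (φ : Γ → EuclideanSpace ℝ (Fin d) → EuclideanSpace ℝ (Fin d))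
    (hφ : ∀ i x, φ i x = ρ • x + a i)
    (K : Set (EuclideanSpace ℝ (Fin d))) (hKc : IsCompact K) (hKne : K.Nonempty)
    (hattr : K = ⋃ i, φ i '' K) (hKball : K ⊆ closedBall 0 1)
    (hfin : ∀ w : List Γ, (nbhdE φ K w).Finite)
    (a₀ : List Γ) (hmax : ∀ w : List Γ, (nbhdE φ K w).ncard ≤ (nbhdE φ K a₀).ncard)
    (h₁ : EuclideanSpace ℝ (Fin d) → EuclideanSpace ℝ (Fin d))
    (hh₁ : h₁ ∈ nbhdE φ K a₀)
    (hover : (wordMap φ a₀ '' K ∩ h₁ '' K).Nonempty) :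
    ∃ b c : List Γ, wordMap φ b = h₁ ∘ wordMap φ c :=
  stmt9_general ρ hρ a φ hφ K hattr hKball hfin a₀ hmax h₁ hh₁ hover
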